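/- arXiv:2011.08399 — 2 statements merged into one kernel-verified Lean document; each statement's English description precedes it below -/
import Mathlib

section
/- In a weighted bipartite graph G, for fixed α, β and query vertex q, the significant (α,β)-community of q is unique and is a subgraph of the (α,β)-community of q. -/
variable {V : Type*}

/-- Upper-layer vertices of an (edge-set) bipartite subgraph. -/
def upperVerts [DecidableEq V] (S : Finset (V × V)) : Finset V := S.image Prod.fst

/-- Lower-layer vertices. -/
def lowerVerts [DecidableEq V] (S : Finset (V × V)) : Finset V := S.image Prod.snd

/-- All vertices. -/
def bverts [DecidableEq V] (S : Finset (V × V)) : Finset V := upperVerts S ∪ lowerVerts S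

/-- Degree of an upper vertex. -/
def updeg [DecidableEq V] (S : Finset (V × V)) (u : V) : ℕ :=
  (S.filter (fun e => e.1 = u)).card

/-- Degree of a lower vertex. -/
def lowdeg [DecidableEq V] (S : Finset (V × V)) (v : V) : ℕ :=
  (S.filter (fun e => e.2 = v)).card

/-- The (α,β) degree constraint. -/
def DegConstr [DecidableEq V] (α β : ℕ) (S : Finset (V × V)) : Prop :=
  (∀ u ∈ upperVerts S, α ≤ updeg S u) ∧ (∀ v ∈ lowerVerts S, β ≤ lowdeg S v)

/-- Adjacency relation induced by the edge set. -/
def adjRel (S : Finset (V × V)) (a b : V) : Prop := (a, b) ∈ S ∨ (b, a) ∈ S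

/-- Connectivity of an edge-set subgraph. -/
def Conn [DecidableEq V] (S : Finset (V × V)) : Prop :=
  ∀ a ∈ bverts S, ∀ b ∈ bverts S, Relation.ReflTransGen (adjRel S) a b

/-- `C` is the (α,β)-core of the bipartite graph with edge set `E`:
it is a subgraph satisfying the degree constraints that contains every
subgraph of `E` satisfying the constraints (hence it is maximal). -/
def IsCore [DecidableEq V] (E : Finset (V × V)) (α β : ℕ) (C : Finset (V × V)) : Prop :=
  C ⊆ E ∧ DegConstr α β C ∧ ∀ S ⊆ E, DegConstr α β S → S ⊆ C

/-- `C` is the (α,β)-community of `q`: the maximal connected subgraph of the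
core `Ecore` containing `q`. -/
def IsCommunity [DecidableEq V] (Ecore : Finset (V × V)) (q : V) (C : Finset (V × V)) : Prop :=
  C ⊆ Ecore ∧ Conn C ∧ q ∈ bverts C ∧ ∀ S ⊆ Ecore, Conn S → q ∈ bverts S → S ⊆ C

/-- `S` is the significant (α,β)-community of `q` inside the (α,β)-community `K`:
connected, contains `q`, satisfies the degree constraints, maximizes the minimum
edge weight `Finset.inf w`, and no proper supergraph with the same properties has
equal weight. -/
def IsSigCom [DecidableEq V] (K : Finset (V × V)) (α β : ℕ) (q : V) (w : V × V → ENNReal)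
    (S : Finset (V × V)) : Prop :=
  S ⊆ K ∧ Conn S ∧ q ∈ bverts S ∧ DegConstr α β S ∧
  (∀ S' ⊆ K, Conn S' → q ∈ bverts S' → DegConstr α β S' → S'.inf w ≤ S.inf w) ∧
  (∀ S', S ⊂ S' → S' ⊆ K → Conn S' → q ∈ bverts S' → DegConstr α β S' → S'.inf w ≠ S.inf w)

/-- The α-offset of `u`: the maximal `β` such that `u` is in the (α,β)-core. -/
noncomputable def saOff [DecidableEq V] (E : Finset (V × V)) (u : V) (α : ℕ) : ℕ :=
  sSup {b | ∃ C, IsCore E α b C ∧ u ∈ bverts C}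

lemma bverts_union [DecidableEq V] (S T : Finset (V × V)) :
    bverts (S ∪ T) = bverts S ∪ bverts T := by
  simp only [bverts, upperVerts, lowerVerts, Finset.image_union, Finset.union_union_union_comm]

lemma updeg_mono [DecidableEq V] {S T : Finset (V × V)} (h : S ⊆ T) (u : V) :
    updeg S u ≤ updeg T u :=
  Finset.card_le_card (Finset.filter_subset_filter _ h)

lemma lowdeg_mono [DecidableEq V] {S T : Finset (V × V)} (h : S ⊆ T) (v : V) :
    lowdeg S v ≤ lowdeg T v :=
  Finset.card_le_card (Finset.filter_subset_filter _ h)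

lemma DegConstr.union [DecidableEq V] {α β : ℕ} {S T : Finset (V × V)}
    (hS : DegConstr α β S) (hT : DegConstr α β T) : DegConstr α β (S ∪ T) := by
  constructor
  · intro u hu
    rw [upperVerts, Finset.image_union, Finset.mem_union] at hu
    rcases hu with hu | hu
    · exact (hS.1 u hu).trans (updeg_mono Finset.subset_union_left u)
    · exact (hT.1 u hu).trans (updeg_mono Finset.subset_union_right u)
  · intro v hv
    rw [lowerVerts, Finset.image_union, Finset.mem_union] at hv
    rcases hv with hv | hv
    · exact (hS.2 v hv).trans (lowdeg_mono Finset.subset_union_left v)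
    · exact (hT.2 v hv).trans (lowdeg_mono Finset.subset_union_right v)

instance adjRel.instSymm (S : Finset (V × V)) : Std.Symm (adjRel S) :=
  ⟨fun _ _ h => h.symm⟩

lemma adjRel_mono {S T : Finset (V × V)} (h : S ⊆ T) {a b : V} (hab : adjRel S a b) :
    adjRel T a b :=
  hab.imp (@h _) (@h _)

lemma Conn.union [DecidableEq V] {S T : Finset (V × V)} {q : V}
    (hS : Conn S) (hT : Conn T) (hqS : q ∈ bverts S) (hqT : q ∈ bverts T) :
    Conn (S ∪ T) := by
  have to_q : ∀ a ∈ bverts (S ∪ T), Relation.ReflTransGen (adjRel (S ∪ T)) a q := by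
    intro a ha
    rw [bverts_union, Finset.mem_union] at ha
    rcases ha with ha | ha
    · exact .mono (fun _ _ => adjRel_mono Finset.subset_union_left) a q (hS a ha q hqS)
    · exact .mono (fun _ _ => adjRel_mono Finset.subset_union_right) a q (hT a ha q hqT)
  exact fun a ha b hb => (to_q a ha).trans (symm (to_q b hb))

/-- The candidates for the significant community of `q` inside `K`. -/
def IsAdmissible [DecidableEq V] (K : Finset (V × V)) (α β : ℕ) (q : V)
    (S : Finset (V × V)) : Prop :=
  S ⊆ K ∧ Conn S ∧ q ∈ bverts S ∧ DegConstr α β S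

lemma IsAdmissible.union [DecidableEq V] {K S T : Finset (V × V)} {α β : ℕ} {q : V}
    (hS : IsAdmissible K α β q S) (hT : IsAdmissible K α β q T) :
    IsAdmissible K α β q (S ∪ T) := by
  obtain ⟨hSK, hSc, hqS, hSd⟩ := hS
  obtain ⟨hTK, hTc, hqT, hTd⟩ := hT
  refine ⟨Finset.union_subset hSK hTK, hSc.union hTc hqS hqT, ?_, hSd.union hTd⟩
  rw [bverts_union]
  exact Finset.mem_union_left _ hqS

section IsSigCom

variable [DecidableEq V] {K S T : Finset (V × V)} {α β : ℕ} {q : V} {w : V × V → ENNReal}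

lemma IsSigCom.isAdmissible (hS : IsSigCom K α β q w S) : IsAdmissible K α β q S :=
  ⟨hS.1, hS.2.1, hS.2.2.1, hS.2.2.2.1⟩

lemma IsSigCom.inf_le (hS : IsSigCom K α β q w S) (hT : IsAdmissible K α β q T) :
    T.inf w ≤ S.inf w :=
  hS.2.2.2.2.1 T hT.1 hT.2.1 hT.2.2.1 hT.2.2.2

/-- `S ∪ T` is admissible of weight `S.inf w`, so it cannot strictly contain `S`. -/
lemma IsSigCom.subset_of_le_inf (hS : IsSigCom K α β q w S) (hT : IsAdmissible K α β q T)
    (hle : S.inf w ≤ T.inf w) : T ⊆ S := by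
  obtain ⟨hUK, hUc, hqU, hUd⟩ := hS.isAdmissible.union hT
  have hU_inf : (S ∪ T).inf w = S.inf w := by
    rw [Finset.inf_union, inf_eq_left.2 hle]
  by_contra hTS
  have hSU : S ⊂ S ∪ T :=
    Finset.ssubset_iff_subset_ne.2 ⟨Finset.subset_union_left,
      fun h => hTS (h ▸ Finset.subset_union_right)⟩
  exact hS.2.2.2.2.2 _ hSU hUK hUc hqU hUd hU_inf

end IsSigCom

theorem sigcom_unique_general [DecidableEq V] (α β : ℕ) (q : V)
    (w : V × V → ENNReal) (K : Finset (V × V))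
    (S₁ S₂ : Finset (V × V))
    (h₁ : IsSigCom K α β q w S₁) (h₂ : IsSigCom K α β q w S₂) :
    S₁ = S₂ ∧ S₁ ⊆ K := by
  have hA₁ := h₁.isAdmissible
  have hA₂ := h₂.isAdmissible
  have h₂₁ : S₂ ⊆ S₁ := h₁.subset_of_le_inf hA₂ (h₂.inf_le hA₁)
  have h₁₂ : S₁ ⊆ S₂ := h₂.subset_of_le_inf hA₁ (h₁.inf_le hA₂)
  exact ⟨h₁₂.antisymm h₂₁, hA₁.1⟩

/-- the significant (α,β)-community of q is unique and is a
subgraph of the (α,β)-community of q. -/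
theorem sigcom_unique [DecidableEq V] (E : Finset (V × V)) (α β : ℕ) (q : V)
    (w : V × V → ENNReal) (C K : Finset (V × V))
    (hC : IsCore E α β C) (hK : IsCommunity C q K)
    (S₁ S₂ : Finset (V × V))
    (h₁ : IsSigCom K α β q w S₁) (h₂ : IsSigCom K α β q w S₂) :
    S₁ = S₂ ∧ S₁ ⊆ K :=
  sigcom_unique_general α β q w K S₁ S₂ h₁ h₂
end

section
/- Let C* be a connected bipartite subgraph with upper layer U(C*), lower layer L(C*), and edge set E(C*). If C* contains a subgraph S satisfying the (α,β) degree constraints (with S connected and nonempty), then α·β − α − β ≤ |E(C*)| − |U(C*)| − |L(C*)|. -/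
variable {V : Type*}

section AuxLemmas

variable [DecidableEq V]

lemma bverts_mono {S T : Finset (V × V)} (h : S ⊆ T) : bverts S ⊆ bverts T :=
  Finset.union_subset_union (Finset.image_subset_image h) (Finset.image_subset_image h)

lemma fst_mem_bverts {S : Finset (V × V)} {e : V × V} (he : e ∈ S) : e.1 ∈ bverts S :=
  Finset.mem_union_left _ (Finset.mem_image_of_mem _ he)

lemma snd_mem_bverts {S : Finset (V × V)} {e : V × V} (he : e ∈ S) : e.2 ∈ bverts S :=
  Finset.mem_union_right _ (Finset.mem_image_of_mem _ he)

lemma card_le_of_updeg {α : ℕ} {S : Finset (V × V)} (h : ∀ u ∈ upperVerts S, α ≤ updeg S u) :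
    α * (upperVerts S).card ≤ S.card := by
  have hsum : S.card = ∑ u ∈ upperVerts S, updeg S u :=
    Finset.card_eq_sum_card_fiberwise (fun e he => Finset.mem_image_of_mem _ he)
  rw [hsum]
  calc α * (upperVerts S).card = ∑ _u ∈ upperVerts S, α := by
        rw [Finset.sum_const, smul_eq_mul, mul_comm]
    _ ≤ _ := Finset.sum_le_sum h

lemma card_le_of_lowdeg {β : ℕ} {S : Finset (V × V)} (h : ∀ v ∈ lowerVerts S, β ≤ lowdeg S v) :
    β * (lowerVerts S).card ≤ S.card := by
  have hsum : S.card = ∑ v ∈ lowerVerts S, lowdeg S v :=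
    Finset.card_eq_sum_card_fiberwise (fun e he => Finset.mem_image_of_mem _ he)
  rw [hsum]
  calc β * (lowerVerts S).card = ∑ _v ∈ lowerVerts S, β := by
        rw [Finset.sum_const, smul_eq_mul, mul_comm]
    _ ≤ _ := Finset.sum_le_sum h

lemma updeg_le_lower {S : Finset (V × V)} (u : V) : updeg S u ≤ (lowerVerts S).card := by
  apply Finset.card_le_card_of_injOn Prod.snd
  · intro e he
    exact Finset.mem_image_of_mem _ (Finset.mem_filter.mp he).1
  · intro e he f hf hef
    have h1 := (Finset.mem_filter.mp he).2
    have h2 := (Finset.mem_filter.mp hf).2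
    exact Prod.ext (h1.trans h2.symm) hef

lemma lowdeg_le_upper {S : Finset (V × V)} (v : V) : lowdeg S v ≤ (upperVerts S).card := by
  apply Finset.card_le_card_of_injOn Prod.fst
  · intro e he
    exact Finset.mem_image_of_mem _ (Finset.mem_filter.mp he).1
  · intro e he f hf hef
    have h1 := (Finset.mem_filter.mp he).2
    have h2 := (Finset.mem_filter.mp hf).2
    exact Prod.ext hef (h1.trans h2.symm)

lemma bverts_insert {S : Finset (V × V)} {e : V × V} :
    bverts (insert e S) = insert e.1 (insert e.2 (bverts S)) := by
  ext x
  simp only [bverts, upperVerts, lowerVerts, Finset.image_insert, Finset.mem_union,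
    Finset.mem_insert]
  tauto

lemma card_bverts_insert_le {S : Finset (V × V)} {e : V × V}
    (h : e.1 ∈ bverts S ∨ e.2 ∈ bverts S) :
    (bverts (insert e S)).card ≤ (bverts S).card + 1 := by
  rw [bverts_insert]
  rcases h with h | h
  · rw [Finset.insert_eq_self.mpr (Finset.mem_insert_of_mem h)]
    exact Finset.card_insert_le _ _
  · rw [Finset.insert_eq_self.mpr h]
    exact Finset.card_insert_le _ _

lemma exists_boundary_edge {T S : Finset (V × V)} {a : V} (ha : a ∈ bverts S) :
    ∀ b, Relation.ReflTransGen (adjRel T) a b → b ∉ bverts S →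
      ∃ e ∈ T, e ∉ S ∧ (e.1 ∈ bverts S ∨ e.2 ∈ bverts S) := by
  intro b hpath
  induction hpath with
  | refl => intro hb; exact absurd ha hb
  | @tail c d _ hcd ih =>
    intro hd
    by_cases hc : c ∈ bverts S
    · rcases hcd with h | h
      · exact ⟨(c, d), h, fun hmem => hd (snd_mem_bverts hmem), Or.inl hc⟩
      · exact ⟨(d, c), h, fun hmem => hd (fst_mem_bverts hmem), Or.inr hc⟩
    · exact ih hc

lemma conn_card_bound {T : Finset (V × V)} (hT : Conn T) :
    ∀ S ⊆ T, S.Nonempty → (bverts T).card + S.card ≤ T.card + (bverts S).card := by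
  suffices h : ∀ k S, S ⊆ T → S.Nonempty → T.card - S.card ≤ k →
      (bverts T).card + S.card ≤ T.card + (bverts S).card from
    fun S hST hne => h T.card S hST hne (Nat.sub_le _ _)
  intro k
  induction k with
  | zero =>
    intro S hST hne hk
    have hcard := Finset.card_le_card hST
    have hST' : S = T := Finset.eq_of_subset_of_card_le hST (by omega)
    subst hST'
    omega
  | succ k ih =>
    intro S hST hne hk
    by_cases hsub : bverts T ⊆ bverts S
    · have h1 := Finset.card_le_card hST
      have h2 := Finset.card_le_card hsub
      omega
    · obtain ⟨b, hbT, hbS⟩ := Finset.not_subset.mp hsub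
      obtain ⟨e0, he0⟩ := hne
      have ha : e0.1 ∈ bverts S := fst_mem_bverts he0
      have haT : e0.1 ∈ bverts T := bverts_mono hST ha
      obtain ⟨e, heT, heS, hor⟩ := exists_boundary_edge ha b (hT _ haT _ hbT) hbS
      have hins : insert e S ⊆ T := Finset.insert_subset heT hST
      have hcard : (insert e S).card = S.card + 1 := Finset.card_insert_of_notMem heS
      have hle : (insert e S).card ≤ T.card := Finset.card_le_card hins
      have hih := ih (insert e S) hins ⟨e, Finset.mem_insert_self _ _⟩ (by omega)
      have hbv := card_bverts_insert_le hor
      omega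

end AuxLemmas

/-- Lemma: expansion bound: if the connected bipartite subgraph C*
contains a nonempty connected subgraph S satisfying the (α,β) degree
constraints, then αβ − α − β ≤ |E(C*)| − |U(C*)| − |L(C*)|. -/
theorem lemma_e1 [DecidableEq V] (α β : ℕ) (hα : 1 ≤ α) (hβ : 1 ≤ β)
    (Cstar S : Finset (V × V))
    (hbip : Disjoint (upperVerts Cstar) (lowerVerts Cstar))
    (hconn : Conn Cstar) (hS : S ⊆ Cstar)
    (hSconn : Conn S) (hSne : S.Nonempty) (hdeg : DegConstr α β S) :
    (α : ℤ) * β - α - β ≤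
      (Cstar.card : ℤ) - (upperVerts Cstar).card - (lowerVerts Cstar).card := by
  obtain ⟨hdU, hdL⟩ := hdeg
  obtain ⟨e0, he0⟩ := hSne
  have f1 : α * (upperVerts S).card ≤ S.card := card_le_of_updeg hdU
  have f2 : β * (lowerVerts S).card ≤ S.card := card_le_of_lowdeg hdL
  have f3 : β ≤ (upperVerts S).card :=
    le_trans (hdL e0.2 (Finset.mem_image_of_mem _ he0)) (lowdeg_le_upper e0.2)
  have f4 : α ≤ (lowerVerts S).card :=
    le_trans (hdU e0.1 (Finset.mem_image_of_mem _ he0)) (updeg_le_lower e0.1)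
  have hUS : upperVerts S ⊆ upperVerts Cstar := Finset.image_subset_image hS
  have hLS : lowerVerts S ⊆ lowerVerts Cstar := Finset.image_subset_image hS
  have hdisjS : Disjoint (upperVerts S) (lowerVerts S) := hbip.mono hUS hLS
  have hbS : (bverts S).card = (upperVerts S).card + (lowerVerts S).card :=
    Finset.card_union_of_disjoint hdisjS
  have hbC : (bverts Cstar).card = (upperVerts Cstar).card + (lowerVerts Cstar).card :=
    Finset.card_union_of_disjoint hbip
  have f5 := conn_card_bound hconn S hS ⟨e0, he0⟩
  have f6 := conn_card_bound hSconn {e0} (Finset.singleton_subset_iff.mpr he0)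
    (Finset.singleton_nonempty e0)
  rw [Finset.card_singleton] at f6
  have hb1 : (bverts ({e0} : Finset (V × V))).card ≤ 2 := by
    have heq : bverts ({e0} : Finset (V × V)) = {e0.1} ∪ {e0.2} := by
      simp [bverts, upperVerts, lowerVerts]
    rw [heq]
    exact le_trans (Finset.card_union_le _ _) (by simp)
  have hm : α * β ≤ S.card := le_trans (Nat.mul_le_mul le_rfl f3) f1
  rcases Nat.lt_or_ge α 2 with h2 | h2
  · have hα1 : α = 1 := by omega
    subst hα1
    have hlin : (upperVerts Cstar).card + (lowerVerts Cstar).card ≤ Cstar.card + 1 := by omega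
    push_cast
    omega
  rcases Nat.lt_or_ge β 2 with h3 | h3
  · have hβ1 : β = 1 := by omega
    subst hβ1
    have hlin : (upperVerts Cstar).card + (lowerVerts Cstar).card ≤ Cstar.card + 1 := by omega
    push_cast
    omega
  · have c1 : (α : ℤ) * (upperVerts S).card ≤ S.card := by exact_mod_cast f1
    have c2 : (β : ℤ) * (lowerVerts S).card ≤ S.card := by exact_mod_cast f2
    have cm : (α : ℤ) * β ≤ S.card := by exact_mod_cast hm
    have h4 : (2 : ℤ) ≤ α := by exact_mod_cast h2
    have h5 : (2 : ℤ) ≤ β := by exact_mod_cast h3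
    have hαβ : (0 : ℤ) ≤ (α : ℤ) * β - α - β := by nlinarith
    have key : ((α : ℤ) * β) * ((α : ℤ) * β - α - β) ≤
        ((α : ℤ) * β) * ((S.card : ℤ) - (upperVerts S).card - (lowerVerts S).card) := by
      nlinarith [mul_le_mul_of_nonneg_left c1 (by positivity : (0:ℤ) ≤ (β:ℤ)),
        mul_le_mul_of_nonneg_left c2 (by positivity : (0:ℤ) ≤ (α:ℤ)),
        mul_nonneg (sub_nonneg.mpr cm) hαβ]
    have hpos : (0 : ℤ) < (α : ℤ) * β := by positivity
    have key2 := le_of_mul_le_mul_left key hpos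
    have lin : (upperVerts Cstar).card + (lowerVerts Cstar).card + S.card ≤
        Cstar.card + (upperVerts S).card + (lowerVerts S).card := by omega
    have lin' : ((upperVerts Cstar).card : ℤ) + (lowerVerts Cstar).card + S.card ≤
        (Cstar.card : ℤ) + (upperVerts S).card + (lowerVerts S).card := by exact_mod_cast lin
    linarith
end
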